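/- (Katz index is a path formulation with ⊕ = +, ⊗ = × and edge representation β·w_e.) For all vertices u, v : V, the Katz index Katz(u,v) := ∑'_{t : ℕ} β^(t+1) * ((w^(t+1)) u v) (the sum over all t ≥ 1 of β^t times the (u,v) entry of the t-th matrix power of w) equals the sum over all walks of positive length from u to v of the product of damped edge weights: Katz(u,v) = ∑' over the sigma type Σ (k : ℕ), {p : Fin (k+2) → V // p 0 = u ∧ p (Fin.last (k+1)) = v} of ∏_{i=0}^{k} (β * w (p i) (p (i+1))). -/

import Mathlib

/-!
Splitting off the first step of a walk and inducting on the length shows that `(w ^ n) u v` is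
the sum of the weights of the walks of length `n` from `u` to `v`; applied to `β • w` this absorbs
`β ^ n` into the edge weights. In `ℝ≥0∞` a sum may be regrouped freely, here by walk length.
-/

open ENNReal

abbrev FinWalk (V : Type*) (n : ℕ) (u v : V) :=
  {p : Fin (n + 1) → V // p 0 = u ∧ p (Fin.last n) = v}

namespace FinWalk

variable {V : Type*}

def weight {R : Type*} [CommMonoid R] (w : V → V → R) {n : ℕ} {u v : V} (p : FinWalk V n u v) :
    R :=
  ∏ i : Fin n, w (p.1 i.castSucc) (p.1 i.succ)

instance uniqueSelf (u : V) : Unique (FinWalk V 0 u u) where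
  default := ⟨fun _ => u, rfl, rfl⟩
  uniq p := Subtype.ext <| funext fun i => by rw [Fin.fin_one_eq_zero i]; exact p.2.1

theorem isEmpty_of_ne {u v : V} (h : u ≠ v) : IsEmpty (FinWalk V 0 u v) :=
  ⟨fun p => h (p.2.1.symm.trans p.2.2)⟩

def consEquiv (n : ℕ) (u v : V) : FinWalk V (n + 1) u v ≃ Σ x : V, FinWalk V n x v where
  toFun p := ⟨p.1 1, ⟨Fin.tail p.1, rfl, by rw [Fin.tail, Fin.succ_last]; exact p.2.2⟩⟩
  invFun q := ⟨Fin.cons u q.2.1, Fin.cons_zero _ _, by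
    rw [← Fin.succ_last, Fin.cons_succ]; exact q.2.2.2⟩
  left_inv p := Subtype.ext <| by
    conv_rhs => rw [← Fin.cons_self_tail p.1, p.2.1]
  right_inv := by
    rintro ⟨x, p, rfl, hp⟩
    rfl

theorem weight_consEquiv_symm {R : Type*} [CommMonoid R] (w : V → V → R) {n : ℕ} {u v : V}
    (q : Σ x : V, FinWalk V n x v) :
    weight w ((consEquiv n u v).symm q) = w u q.1 * weight w q.2 := by
  obtain ⟨x, p, rfl, hp⟩ := q
  simp [weight, consEquiv, Fin.prod_univ_succ]

end FinWalk

open FinWalk in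
theorem Matrix.pow_apply_eq_sum_weight_finWalk {V R : Type*} [Fintype V] [DecidableEq V]
    [CommSemiring R] (w : Matrix V V R) (n : ℕ) (u v : V) :
    (w ^ n) u v = ∑ p : FinWalk V n u v, weight w p := by
  induction n generalizing u with
  | zero =>
    by_cases h : u = v
    · subst h
      simp [weight]
    · have := isEmpty_of_ne h
      simp [Matrix.one_apply_ne h]
  | succ n ih =>
    calc (w ^ (n + 1)) u v
        = ∑ q : Σ x : V, FinWalk V n x v, w u q.1 * weight w q.2 := by
          simp only [pow_succ', Matrix.mul_apply, ih, Finset.mul_sum, Fintype.sum_sigma]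
      _ = ∑ p : FinWalk V (n + 1) u v, weight w p :=
          Fintype.sum_equiv (consEquiv n u v).symm _ _ fun q => (weight_consEquiv_symm w q).symm

theorem katz_eq_sum_over_paths {V : Type*} [Fintype V] [DecidableEq V]
    (w : Matrix V V ℝ≥0∞) (β : ℝ≥0∞) (u v : V) :
    (∑' t : ℕ, β ^ (t + 1) * (w ^ (t + 1)) u v) =
      ∑' q : (Σ k : ℕ, {p : Fin (k + 2) → V // p 0 = u ∧ p (Fin.last (k + 1)) = v}),
        ∏ i : Fin (q.1 + 1), β * w (q.2.1 i.castSucc) (q.2.1 i.succ) := by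
  rw [ENNReal.tsum_sigma']
  refine tsum_congr fun k => ?_
  rw [tsum_fintype, ← smul_eq_mul, ← Matrix.smul_apply, ← smul_pow,
    Matrix.pow_apply_eq_sum_weight_finWalk]
  rfl
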